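/- arXiv:1404.5684 — 4 statements merged into one kernel-verified Lean document; each statement's English description precedes it below -/
import Mathlib

section
/- For λ > 0, (A^T A + λI)^{-1} = (A_k^T A_k + λI)^{-1} - V̂_k Ŝ_k V̂_k^T, where Ŝ_k = diag(σ_s^2/(λ^2 + λσ_s^2)) for s = k+1,...,r. -/
/-!
Stacking the singular vectors, `A = [U_k Û_k] diag(σ, τ) [V_k V̂_k]ᵀ` where both stacked matrices
have orthonormal columns, so `AᵀA + λI = W diag(d) Wᵀ + λI` with `W = [V_k V̂_k]` and `d = (σ², τ²)`.
For any `W` with orthonormal columns (not necessarily square) the inverse of `W diag(d) Wᵀ + λI`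
is `λ⁻¹ (I - W diag(f) Wᵀ)` with `f = d / (λ + d)`: multiplying out leaves
`W diag(d - d f - λ f) Wᵀ = 0`. Applying this to `A` and to `A_k`, the `V_k`-parts cancel and the
difference is `λ⁻¹ V̂_k diag(τ² / (λ + τ²)) V̂_kᵀ`.
-/

open Matrix

namespace Matrix

variable {R K : Type*} [CommRing R] [Field K] {n p q r : Type*}

theorem transpose_fromCols_mul_fromCols_eq_one [Fintype n] [DecidableEq p] [DecidableEq q]
    {A : Matrix n p R} {B : Matrix n q R} (hA : Aᵀ * A = 1) (hB : Bᵀ * B = 1)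
    (hAB : Aᵀ * B = 0) :
    (fromCols A B)ᵀ * fromCols A B = 1 := by
  have hBA : Bᵀ * A = 0 := by simpa using congrArg transpose hAB
  rw [transpose_fromCols, fromRows_mul_fromCols, hA, hB, hAB, hBA, fromBlocks_one]

theorem fromCols_mul_diagonal_sumElim_mul_transpose_fromCols [Fintype p] [Fintype q]
    [DecidableEq p] [DecidableEq q] (A : Matrix r p R) (B : Matrix r q R) (C : Matrix n p R)
    (D : Matrix n q R) (a : p → R) (b : q → R) :
    fromCols A B * diagonal (Sum.elim a b) * (fromCols C D)ᵀ =
      A * diagonal a * Cᵀ + B * diagonal b * Dᵀ := by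
  rw [← fromBlocks_diagonal, fromCols_mul_fromBlocks, transpose_fromCols, fromCols_mul_fromRows]
  simp only [Matrix.mul_zero, add_zero, zero_add]

theorem transpose_mul_self_of_svd [Fintype p] [Fintype r] [DecidableEq p] {U : Matrix r p R}
    (hU : Uᵀ * U = 1) (s : p → R) (V : Matrix n p R) :
    (U * diagonal s * Vᵀ)ᵀ * (U * diagonal s * Vᵀ) = V * diagonal (fun i => s i ^ 2) * Vᵀ := by
  have hUU : ∀ X : Matrix p n R, Uᵀ * (U * X) = X := fun X => by
    rw [← Matrix.mul_assoc, hU, Matrix.one_mul]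
  simp only [transpose_mul, diagonal_transpose, transpose_transpose, Matrix.mul_assoc, hUU]
  rw [← Matrix.mul_assoc (diagonal s), diagonal_mul_diagonal]
  simp only [sq]

theorem conj_diagonal_mul_conj_diagonal [Fintype n] [Fintype p] [DecidableEq p]
    {V : Matrix n p R} (hV : Vᵀ * V = 1) (a b : p → R) :
    V * diagonal a * Vᵀ * (V * diagonal b * Vᵀ) = V * diagonal (a * b) * Vᵀ := by
  rw [Matrix.mul_assoc, ← Matrix.mul_assoc Vᵀ, ← Matrix.mul_assoc Vᵀ, hV, Matrix.one_mul,
    ← Matrix.mul_assoc, Matrix.mul_assoc V, diagonal_mul_diagonal]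
  rfl

theorem inv_conj_diagonal_add_smul_one [Fintype n] [Fintype p] [DecidableEq n] [DecidableEq p]
    {V : Matrix n p K} (hV : Vᵀ * V = 1) (d : p → K) {c : K} (hc : c ≠ 0)
    (hd : ∀ i, c + d i ≠ 0) :
    (V * diagonal d * Vᵀ + c • 1)⁻¹ =
      c⁻¹ • (1 - V * diagonal (fun i => d i / (c + d i)) * Vᵀ) := by
  set f : p → K := fun i => d i / (c + d i)
  have hf : d * f + c • f = d := by
    ext i
    simp only [Pi.add_apply, Pi.mul_apply, Pi.smul_apply, smul_eq_mul, f]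
    field_simp [hd i]
    ring
  have hsplit : V * diagonal (d * f) * Vᵀ + c • (V * diagonal f * Vᵀ) = V * diagonal d * Vᵀ := by
    rw [← Matrix.smul_mul, ← Matrix.mul_smul, ← diagonal_smul, ← Matrix.add_mul, ← Matrix.mul_add,
      diagonal_add]
    exact congrArg (fun g => V * diagonal g * Vᵀ) hf
  apply inv_eq_right_inv
  calc (V * diagonal d * Vᵀ + c • 1) * (c⁻¹ • (1 - V * diagonal f * Vᵀ))
      = c⁻¹ • (c • 1 + (V * diagonal d * Vᵀ -
          (V * diagonal (d * f) * Vᵀ + c • (V * diagonal f * Vᵀ)))) := by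
        simp only [Matrix.mul_smul, Matrix.mul_sub, Matrix.add_mul, Matrix.mul_one,
          conj_diagonal_mul_conj_diagonal hV, Matrix.smul_mul, Matrix.one_mul]
        module
    _ = 1 := by
      rw [hsplit, sub_self, add_zero, smul_smul, inv_mul_cancel₀ hc, one_smul]

end Matrix

theorem stmt5_general (m n k l : ℕ)
    (Uk : Matrix (Fin m) (Fin k) ℝ) (Vk : Matrix (Fin n) (Fin k) ℝ)
    (Uh : Matrix (Fin m) (Fin l) ℝ) (Vh : Matrix (Fin n) (Fin l) ℝ)
    (σ : Fin k → ℝ) (τ : Fin l → ℝ)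
    (hUk : Ukᵀ * Uk = 1) (hVk : Vkᵀ * Vk = 1)
    (hUh : Uhᵀ * Uh = 1) (hVh : Vhᵀ * Vh = 1)
    (hUO : Ukᵀ * Uh = 0) (hVO : Vkᵀ * Vh = 0)
    (lam : ℝ) (hlam : 0 < lam)
    (A : Matrix (Fin m) (Fin n) ℝ)
    (hA : A = Uk * Matrix.diagonal σ * Vkᵀ + Uh * Matrix.diagonal τ * Vhᵀ)
    (Ak : Matrix (Fin m) (Fin n) ℝ)
    (hAk : Ak = Uk * Matrix.diagonal σ * Vkᵀ) :
    (Aᵀ * A + lam • (1 : Matrix (Fin n) (Fin n) ℝ))⁻¹ =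
      (Akᵀ * Ak + lam • (1 : Matrix (Fin n) (Fin n) ℝ))⁻¹ -
        Vh * Matrix.diagonal (fun s => τ s ^ 2 / (lam ^ 2 + lam * τ s ^ 2)) * Vhᵀ := by
  have hV := transpose_fromCols_mul_fromCols_eq_one hVk hVh hVO
  have hA_svd : A = fromCols Uk Uh * diagonal (Sum.elim σ τ) * (fromCols Vk Vh)ᵀ := by
    rw [hA, fromCols_mul_diagonal_sumElim_mul_transpose_fromCols]
  have hlam_add_sq (x : ℝ) : lam + x ^ 2 ≠ 0 := by positivity
  have hsplit : (fun i => Sum.elim σ τ i ^ 2 / (lam + Sum.elim σ τ i ^ 2)) =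
      Sum.elim (fun i => σ i ^ 2 / (lam + σ i ^ 2)) (fun i => τ i ^ 2 / (lam + τ i ^ 2)) := by
    ext (i | i) <;> rfl
  have htail : (fun s => τ s ^ 2 / (lam ^ 2 + lam * τ s ^ 2)) =
      lam⁻¹ • fun s => τ s ^ 2 / (lam + τ s ^ 2) := by
    ext s
    rw [Pi.smul_apply, smul_eq_mul, ← div_eq_inv_mul, div_div]
    ring
  rw [hA_svd, transpose_mul_self_of_svd (transpose_fromCols_mul_fromCols_eq_one hUk hUh hUO),
    inv_conj_diagonal_add_smul_one hV _ hlam.ne' fun _ => hlam_add_sq _, hsplit,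
    fromCols_mul_diagonal_sumElim_mul_transpose_fromCols, hAk, transpose_mul_self_of_svd hUk,
    inv_conj_diagonal_add_smul_one hVk _ hlam.ne' fun _ => hlam_add_sq _, htail, diagonal_smul,
    Matrix.mul_smul, Matrix.smul_mul]
  module

/-- For `λ > 0`,
`(Aᵀ A + λ I)⁻¹ = (A_kᵀ A_k + λ I)⁻¹ - V̂_k Ŝ_k V̂_kᵀ`
where `Ŝ_k = diag(σ_s² / (λ² + λ σ_s²))` for the tail singular values. -/
theorem stmt5 (m n k l : ℕ)
    (Uk : Matrix (Fin m) (Fin k) ℝ) (Vk : Matrix (Fin n) (Fin k) ℝ)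
    (Uh : Matrix (Fin m) (Fin l) ℝ) (Vh : Matrix (Fin n) (Fin l) ℝ)
    (σ : Fin k → ℝ) (τ : Fin l → ℝ)
    (hσ : ∀ s, 0 < σ s) (hτ : ∀ s, 0 < τ s)
    (hUk : Ukᵀ * Uk = 1) (hVk : Vkᵀ * Vk = 1)
    (hUh : Uhᵀ * Uh = 1) (hVh : Vhᵀ * Vh = 1)
    (hUO : Ukᵀ * Uh = 0) (hVO : Vkᵀ * Vh = 0)
    (lam : ℝ) (hlam : 0 < lam)
    (A : Matrix (Fin m) (Fin n) ℝ)
    (hA : A = Uk * Matrix.diagonal σ * Vkᵀ + Uh * Matrix.diagonal τ * Vhᵀ)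
    (Ak : Matrix (Fin m) (Fin n) ℝ)
    (hAk : Ak = Uk * Matrix.diagonal σ * Vkᵀ) :
    (Aᵀ * A + lam • (1 : Matrix (Fin n) (Fin n) ℝ))⁻¹ =
      (Akᵀ * Ak + lam • (1 : Matrix (Fin n) (Fin n) ℝ))⁻¹ -
        Vh * Matrix.diagonal (fun s => τ s ^ 2 / (lam ^ 2 + lam * τ s ^ 2)) * Vhᵀ :=
  stmt5_general m n k l Uk Vk Uh Vh σ τ hUk hVk hUh hVh hUO hVO lam hlam A hA Ak hAk
end

section
/- The truncated Tikhonov solution is the orthogonal projection of the true Tikhonov solution onto the span of the first k right singular vectors: x̃₁ = V_k V_k^T x̄, where x̄ = (A^T A + λI)^{-1} A^T b and x̃₁ = (A_k^T A_k + λI)^{-1} A_k^T b. -/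
open Matrix

/-!
Write `P = V_k V_kᵀ`, an orthogonal projection. The orthogonality relations give `A P = A_k`, and
`Aᵀ A P = Aᵀ A_k = V_k Σ U_kᵀ U_k Σ V_kᵀ` is symmetric, so `P` commutes with `Aᵀ A`. Hence
`A_kᵀ A_k + λ = P Aᵀ A + λ` intertwines with `Aᵀ A + λ` through `P`:
`(A_kᵀ A_k + λ) P = P (Aᵀ A + λ)`. Both are positive definite, so inverting gives
`(A_kᵀ A_k + λ)⁻¹ P = P (Aᵀ A + λ)⁻¹`, and applying this to `Aᵀ b` (with `A_kᵀ b = P Aᵀ b`)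
is the claim.
-/

section Tikhonov

variable {m n : Type*} [Fintype m] [Fintype n] [DecidableEq n]

theorem isUnit_transpose_mul_self_add_smul_one (A : Matrix m n ℝ) {lam : ℝ} (hlam : 0 < lam) :
    IsUnit (Aᵀ * A + lam • (1 : Matrix n n ℝ)) :=
  (PosDef.posSemidef_add (posSemidef_conjTranspose_mul_self A) (PosDef.one.smul hlam)).isUnit

theorem mul_inv_eq_inv_mul_of_mul_eq_mul {α : Type*} [CommRing α] {M N P : Matrix n n α}
    (hM : IsUnit M) (hN : IsUnit N) (h : N * P = P * M) : P * M⁻¹ = N⁻¹ * P := by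
  have := hM.invertible
  have := hN.invertible
  calc P * M⁻¹ = N⁻¹ * (N * P) * M⁻¹ := by rw [inv_mul_cancel_left_of_invertible]
    _ = N⁻¹ * P := by rw [h, Matrix.mul_assoc, mul_inv_cancel_right_of_invertible]

theorem tikhonov_mul_projection (A : Matrix m n ℝ) {P : Matrix n n ℝ}
    (hPt : Pᵀ = P) (hPP : P * P = P) (hcomm : Commute (Aᵀ * A) P) {lam : ℝ} (hlam : 0 < lam)
    (b : m → ℝ) :
    ((A * P)ᵀ * (A * P) + lam • (1 : Matrix n n ℝ))⁻¹ *ᵥ ((A * P)ᵀ *ᵥ b) =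
      P *ᵥ ((Aᵀ * A + lam • (1 : Matrix n n ℝ))⁻¹ *ᵥ (Aᵀ *ᵥ b)) := by
  have hgram : (A * P)ᵀ * (A * P) = P * (Aᵀ * A) := by
    rw [transpose_mul, hPt, Matrix.mul_assoc, ← Matrix.mul_assoc Aᵀ, hcomm.eq,
      ← Matrix.mul_assoc, hPP]
  have hintertwine : ((A * P)ᵀ * (A * P) + lam • 1) * P = P * (Aᵀ * A + lam • 1) := by
    rw [hgram, Matrix.add_mul, Matrix.mul_add, Matrix.mul_assoc, hcomm.eq, ← Matrix.mul_assoc,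
      hPP, Matrix.smul_mul, Matrix.mul_smul, Matrix.one_mul, Matrix.mul_one]
  have hinv := mul_inv_eq_inv_mul_of_mul_eq_mul (isUnit_transpose_mul_self_add_smul_one A hlam)
    (isUnit_transpose_mul_self_add_smul_one (A * P) hlam) hintertwine
  rw [mulVec_mulVec (M := P), hinv, ← mulVec_mulVec, transpose_mul, hPt, mulVec_mulVec (M := P)]

end Tikhonov

section SVDSplit

variable {m n k l : Type*} [Fintype n] [Fintype k] [Fintype l]
  {Uk : Matrix m k ℝ} {Vk : Matrix n k ℝ} {Uh : Matrix m l ℝ} {Vh : Matrix n l ℝ}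

theorem svdSplit_mul_projection [DecidableEq k] (S : Matrix k k ℝ) (T : Matrix l l ℝ)
    (hVk : Vkᵀ * Vk = 1) (hVO : Vkᵀ * Vh = 0) :
    (Uk * S * Vkᵀ + Uh * T * Vhᵀ) * (Vk * Vkᵀ) = Uk * S * Vkᵀ := by
  have hVO' : Vhᵀ * Vk = 0 := by simpa using congrArg transpose hVO
  rw [Matrix.add_mul, Matrix.mul_assoc, ← Matrix.mul_assoc Vkᵀ, hVk, Matrix.one_mul,
    Matrix.mul_assoc (Uh * T), ← Matrix.mul_assoc Vhᵀ, hVO', Matrix.zero_mul, Matrix.mul_zero,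
    add_zero]

theorem svdSplit_commute_projection [Fintype m] [DecidableEq k] (S : Matrix k k ℝ)
    (T : Matrix l l ℝ) (hUO : Ukᵀ * Uh = 0) (hVk : Vkᵀ * Vk = 1) (hVO : Vkᵀ * Vh = 0) :
    Commute ((Uk * S * Vkᵀ + Uh * T * Vhᵀ)ᵀ * (Uk * S * Vkᵀ + Uh * T * Vhᵀ)) (Vk * Vkᵀ) := by
  set A := Uk * S * Vkᵀ + Uh * T * Vhᵀ
  have hUO' : Uhᵀ * Uk = 0 := by simpa using congrArg transpose hUO
  have hsymm : Aᵀ * A * (Vk * Vkᵀ) = Vk * (Sᵀ * (Ukᵀ * Uk) * S) * Vkᵀ := by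
    rw [Matrix.mul_assoc, svdSplit_mul_projection S T hVk hVO]
    simp only [A, transpose_add, transpose_mul, transpose_transpose, Matrix.add_mul,
      Matrix.mul_assoc]
    rw [← Matrix.mul_assoc Uhᵀ Uk, hUO']
    simp only [Matrix.zero_mul, Matrix.mul_zero, add_zero]
  calc Aᵀ * A * (Vk * Vkᵀ) = (Aᵀ * A * (Vk * Vkᵀ))ᵀ := by
        rw [hsymm]; simp only [transpose_mul, transpose_transpose, Matrix.mul_assoc]
    _ = Vk * Vkᵀ * (Aᵀ * A) := by simp only [transpose_mul, transpose_transpose]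

end SVDSplit

theorem stmt11_general (m n k l : ℕ)
    (Uk : Matrix (Fin m) (Fin k) ℝ) (Vk : Matrix (Fin n) (Fin k) ℝ)
    (Uh : Matrix (Fin m) (Fin l) ℝ) (Vh : Matrix (Fin n) (Fin l) ℝ)
    (σ : Fin k → ℝ) (τ : Fin l → ℝ)
    (hVk : Vkᵀ * Vk = 1)
    (hUO : Ukᵀ * Uh = 0) (hVO : Vkᵀ * Vh = 0)
    (lam : ℝ) (hlam : 0 < lam)
    (A : Matrix (Fin m) (Fin n) ℝ)
    (hA : A = Uk * Matrix.diagonal σ * Vkᵀ + Uh * Matrix.diagonal τ * Vhᵀ)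
    (Ak : Matrix (Fin m) (Fin n) ℝ)
    (hAk : Ak = Uk * Matrix.diagonal σ * Vkᵀ)
    (b : Fin m → ℝ) :
    ((Akᵀ * Ak + lam • (1 : Matrix (Fin n) (Fin n) ℝ))⁻¹).mulVec (Akᵀ.mulVec b) =
      (Vk * Vkᵀ).mulVec
        (((Aᵀ * A + lam • (1 : Matrix (Fin n) (Fin n) ℝ))⁻¹).mulVec (Aᵀ.mulVec b)) := by
  have hPt : (Vk * Vkᵀ)ᵀ = Vk * Vkᵀ := by rw [transpose_mul, transpose_transpose]
  have hPP : Vk * Vkᵀ * (Vk * Vkᵀ) = Vk * Vkᵀ := by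
    rw [Matrix.mul_assoc, ← Matrix.mul_assoc Vkᵀ, hVk, Matrix.one_mul]
  rw [hAk, ← svdSplit_mul_projection (diagonal σ) (diagonal τ) hVk hVO, ← hA]
  exact tikhonov_mul_projection A hPt hPP
    (hA ▸ svdSplit_commute_projection (diagonal σ) (diagonal τ) hUO hVk hVO) hlam b

/-- The truncated Tikhonov solution is the orthogonal projection of the true
Tikhonov solution onto the span of the first k right singular vectors:
`x̃₁ = V_k V_kᵀ x̄`. -/
theorem stmt11 (m n k l : ℕ)
    (Uk : Matrix (Fin m) (Fin k) ℝ) (Vk : Matrix (Fin n) (Fin k) ℝ)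
    (Uh : Matrix (Fin m) (Fin l) ℝ) (Vh : Matrix (Fin n) (Fin l) ℝ)
    (σ : Fin k → ℝ) (τ : Fin l → ℝ)
    (hσ : ∀ s, 0 < σ s) (hτ : ∀ s, 0 < τ s)
    (hUk : Ukᵀ * Uk = 1) (hVk : Vkᵀ * Vk = 1)
    (hUh : Uhᵀ * Uh = 1) (hVh : Vhᵀ * Vh = 1)
    (hUO : Ukᵀ * Uh = 0) (hVO : Vkᵀ * Vh = 0)
    (hVcomplete : Vk * Vkᵀ + Vh * Vhᵀ = 1)
    (lam : ℝ) (hlam : 0 < lam)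
    (A : Matrix (Fin m) (Fin n) ℝ)
    (hA : A = Uk * Matrix.diagonal σ * Vkᵀ + Uh * Matrix.diagonal τ * Vhᵀ)
    (Ak : Matrix (Fin m) (Fin n) ℝ)
    (hAk : Ak = Uk * Matrix.diagonal σ * Vkᵀ)
    (b : Fin m → ℝ) :
    ((Akᵀ * Ak + lam • (1 : Matrix (Fin n) (Fin n) ℝ))⁻¹).mulVec (Akᵀ.mulVec b) =
      (Vk * Vkᵀ).mulVec
        (((Aᵀ * A + lam • (1 : Matrix (Fin n) (Fin n) ℝ))⁻¹).mulVec (Aᵀ.mulVec b)) :=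
  stmt11_general m n k l Uk Vk Uh Vh σ τ hVk hUO hVO lam hlam A hA Ak hAk b
end

section
/- The error between x̄ = (A^T A + λI)^{-1} A^T b and x̂₁ = (A_k^T A_k + λI)^{-1} A^T b satisfies ||x̄ - x̂₁||_2 ≤ (σ_{k+1}^3/(λ^2 + λσ_{k+1}^2)) ||b||_2. -/
/-!
Both ridge operators `(AᵀA + λI)⁻¹` and `(A_kᵀA_k + λI)⁻¹` act diagonally on the right singular
vectors: on the columns of `V_k` both multiply by `(σᵢ² + λ)⁻¹`, on the columns of `V_h` by
`(τⱼ² + λ)⁻¹` and `λ⁻¹` respectively. Since `Aᵀ = V_k Σ U_kᵀ + V_h T U_hᵀ`, the `V_k` parts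
cancel and `x̄ - x̂₁ = V_h diag(τⱼ/(τⱼ² + λ) - τⱼ/λ) U_hᵀ b`. The diagonal entries have modulus
`τ³/(λ(τ² + λ))`, which is increasing in `τ`, so they are bounded by its value at `τ₀ = σ_{k+1}`.
-/

open Matrix

/-- Euclidean (ℓ2) norm of a finite real vector. -/
noncomputable def vecEnorm {n : ℕ} (v : Fin n → ℝ) : ℝ :=
  Real.sqrt (∑ i, v i ^ 2)

section OrthogonalSplit

variable {R m n k l : Type*} [CommSemiring R] [Fintype n] [Fintype k] [Fintype l]
  [DecidableEq k] {U₁ : Matrix m k R} {V₁ : Matrix n k R} {U₂ : Matrix m l R} {V₂ : Matrix n l R}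

theorem orthogonal_split_mul_right (X₁ : Matrix k k R) (X₂ : Matrix l l R)
    (hV₁ : V₁ᵀ * V₁ = 1) (hV : V₂ᵀ * V₁ = 0) :
    (U₁ * X₁ * V₁ᵀ + U₂ * X₂ * V₂ᵀ) * V₁ = U₁ * X₁ := by
  simp only [Matrix.add_mul, Matrix.mul_assoc, hV₁, hV, Matrix.mul_one, Matrix.mul_zero, add_zero]

theorem orthogonal_split_gram_mul_right [Fintype m] (X₁ : Matrix k k R) (X₂ : Matrix l l R)
    (hU₁ : U₁ᵀ * U₁ = 1) (hV₁ : V₁ᵀ * V₁ = 1) (hU : U₂ᵀ * U₁ = 0) (hV : V₂ᵀ * V₁ = 0) :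
    (U₁ * X₁ * V₁ᵀ + U₂ * X₂ * V₂ᵀ)ᵀ * (U₁ * X₁ * V₁ᵀ + U₂ * X₂ * V₂ᵀ) * V₁
      = V₁ * (X₁ᵀ * X₁) := by
  have hAt : (U₁ * X₁ * V₁ᵀ + U₂ * X₂ * V₂ᵀ)ᵀ = V₁ * X₁ᵀ * U₁ᵀ + V₂ * X₂ᵀ * U₂ᵀ := by
    simp only [transpose_add, transpose_mul, transpose_transpose, Matrix.mul_assoc]
  rw [Matrix.mul_assoc, orthogonal_split_mul_right _ _ hV₁ hV, hAt, ← Matrix.mul_assoc,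
    orthogonal_split_mul_right _ _ hU₁ hU, Matrix.mul_assoc]

end OrthogonalSplit

theorem inv_mul_eq_mul_diagonal_inv {K n k : Type*} [Field K] [Fintype n] [DecidableEq n]
    [Fintype k] [DecidableEq k] {M : Matrix n n K} (hM : IsUnit M) {V : Matrix n k K}
    {c : k → K} (hc : ∀ i, c i ≠ 0) (h : M * V = V * diagonal c) :
    M⁻¹ * V = V * diagonal c⁻¹ := by
  have hcc : diagonal c * diagonal c⁻¹ = (1 : Matrix k k K) := by
    rw [diagonal_mul_diagonal, ← diagonal_one]
    exact congrArg diagonal (funext fun i => mul_inv_cancel₀ (hc i))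
  calc M⁻¹ * V = M⁻¹ * (V * diagonal c) * diagonal c⁻¹ := by
        rw [Matrix.mul_assoc, Matrix.mul_assoc, hcc, Matrix.mul_one]
    _ = V * diagonal c⁻¹ := by
        rw [← h, nonsing_inv_mul_cancel_left _ _ ((isUnit_iff_isUnit_det M).mp hM)]

theorem posDef_transpose_mul_self_add_smul_one {m n : Type*} [Fintype m] [Fintype n]
    [DecidableEq n] (A : Matrix m n ℝ) {lam : ℝ} (hlam : 0 < lam) :
    (Aᵀ * A + lam • (1 : Matrix n n ℝ)).PosDef := by
  simpa using PosDef.posSemidef_add (posSemidef_conjTranspose_mul_self A) (PosDef.one.smul hlam)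

theorem inv_transpose_mul_self_add_smul_mul_of_gram {m n k : Type*} [Fintype m] [Fintype n]
    [DecidableEq n] [Fintype k] [DecidableEq k] (A : Matrix m n ℝ) {lam : ℝ} (hlam : 0 < lam)
    {V : Matrix n k ℝ} {d : k → ℝ} (hd : ∀ i, 0 ≤ d i) (h : Aᵀ * A * V = V * diagonal d) :
    (Aᵀ * A + lam • (1 : Matrix n n ℝ))⁻¹ * V = V * diagonal (fun i => (d i + lam)⁻¹) := by
  refine inv_mul_eq_mul_diagonal_inv (posDef_transpose_mul_self_add_smul_one A hlam).isUnit
    (fun i => (add_pos_of_nonneg_of_pos (hd i) hlam).ne') ?_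
  rw [Matrix.add_mul, h, Matrix.smul_mul, Matrix.one_mul, smul_eq_mul_diagonal, ← Matrix.mul_add,
    diagonal_add]

theorem orthogonal_split_ridge_inv_mul {m n k l : Type*} [Fintype m] [Fintype n] [DecidableEq n]
    [Fintype k] [DecidableEq k] [Fintype l] {U₁ : Matrix m k ℝ} {V₁ : Matrix n k ℝ}
    {U₂ : Matrix m l ℝ} {V₂ : Matrix n l ℝ} {A : Matrix m n ℝ} (d₁ : k → ℝ) (X₂ : Matrix l l ℝ)
    (hU₁ : U₁ᵀ * U₁ = 1) (hV₁ : V₁ᵀ * V₁ = 1) (hU : U₂ᵀ * U₁ = 0) (hV : V₂ᵀ * V₁ = 0)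
    (hA : A = U₁ * diagonal d₁ * V₁ᵀ + U₂ * X₂ * V₂ᵀ) {lam : ℝ} (hlam : 0 < lam) :
    (Aᵀ * A + lam • (1 : Matrix n n ℝ))⁻¹ * V₁ = V₁ * diagonal (fun i => (d₁ i ^ 2 + lam)⁻¹) := by
  refine inv_transpose_mul_self_add_smul_mul_of_gram A hlam (fun i => sq_nonneg (d₁ i)) ?_
  rw [hA, orthogonal_split_gram_mul_right _ _ hU₁ hV₁ hU hV, diagonal_transpose,
    diagonal_mul_diagonal]
  simp only [sq]

section EuclideanNorm

variable {m n : ℕ}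

theorem vecEnorm_eq_sqrt_dotProduct (v : Fin n → ℝ) : vecEnorm v = Real.sqrt (v ⬝ᵥ v) := by
  simp only [vecEnorm, dotProduct, sq]

theorem vecEnorm_nonneg (v : Fin n → ℝ) : 0 ≤ vecEnorm v := Real.sqrt_nonneg _

theorem vecEnorm_sq (v : Fin n → ℝ) : vecEnorm v ^ 2 = v ⬝ᵥ v := by
  rw [vecEnorm_eq_sqrt_dotProduct]
  exact Real.sq_sqrt (Finset.sum_nonneg fun i _ => mul_self_nonneg (v i))

theorem dotProduct_le_vecEnorm_mul_vecEnorm (v w : Fin n → ℝ) :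
    v ⬝ᵥ w ≤ vecEnorm v * vecEnorm w := by
  rw [vecEnorm, vecEnorm, ← Real.sqrt_mul (Finset.sum_nonneg fun i _ => sq_nonneg (v i))]
  refine (le_abs_self _).trans (Real.abs_le_sqrt ?_)
  simpa only [dotProduct, mul_pow] using Finset.sum_mul_sq_le_sq_mul_sq Finset.univ v w

theorem vecEnorm_mulVec_of_transpose_mul_self {W : Matrix (Fin m) (Fin n) ℝ} (hW : Wᵀ * W = 1)
    (v : Fin n → ℝ) : vecEnorm (W *ᵥ v) = vecEnorm v := by
  rw [vecEnorm_eq_sqrt_dotProduct, vecEnorm_eq_sqrt_dotProduct, dotProduct_mulVec,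
    ← mulVec_transpose, mulVec_mulVec, hW, one_mulVec]

theorem vecEnorm_transpose_mulVec_le {W : Matrix (Fin m) (Fin n) ℝ} (hW : Wᵀ * W = 1)
    (b : Fin m → ℝ) : vecEnorm (Wᵀ *ᵥ b) ≤ vecEnorm b := by
  have key : vecEnorm (Wᵀ *ᵥ b) ^ 2 ≤ vecEnorm b * vecEnorm (Wᵀ *ᵥ b) :=
    calc vecEnorm (Wᵀ *ᵥ b) ^ 2 = b ⬝ᵥ (W *ᵥ (Wᵀ *ᵥ b)) := by
          rw [vecEnorm_sq, mulVec_transpose, dotProduct_mulVec]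
      _ ≤ vecEnorm b * vecEnorm (Wᵀ *ᵥ b) := by
          rw [← vecEnorm_mulVec_of_transpose_mul_self hW (Wᵀ *ᵥ b)]
          exact dotProduct_le_vecEnorm_mul_vecEnorm _ _
  nlinarith [vecEnorm_nonneg b, vecEnorm_nonneg (Wᵀ *ᵥ b)]

theorem vecEnorm_diagonal_mulVec_le {d : Fin n → ℝ} {c : ℝ} (hc : 0 ≤ c) (hd : ∀ i, |d i| ≤ c)
    (v : Fin n → ℝ) : vecEnorm (diagonal d *ᵥ v) ≤ c * vecEnorm v := by
  rw [vecEnorm, vecEnorm, ← Real.sqrt_sq hc, ← Real.sqrt_mul (sq_nonneg c), Finset.mul_sum]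
  refine Real.sqrt_le_sqrt (Finset.sum_le_sum fun i _ => ?_)
  rw [mulVec_diagonal, mul_pow]
  exact mul_le_mul_of_nonneg_right (sq_le_sq' (abs_le.mp (hd i)).1 (abs_le.mp (hd i)).2)
    (sq_nonneg _)

theorem vecEnorm_mul_diagonal_mul_transpose_mulVec_le {l : ℕ} {V : Matrix (Fin n) (Fin l) ℝ}
    {U : Matrix (Fin m) (Fin l) ℝ} (hV : Vᵀ * V = 1) (hU : Uᵀ * U = 1) {d : Fin l → ℝ} {c : ℝ}
    (hc : 0 ≤ c) (hd : ∀ i, |d i| ≤ c) (b : Fin m → ℝ) :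
    vecEnorm ((V * diagonal d * Uᵀ) *ᵥ b) ≤ c * vecEnorm b := by
  rw [← mulVec_mulVec, ← mulVec_mulVec, vecEnorm_mulVec_of_transpose_mul_self hV]
  exact (vecEnorm_diagonal_mulVec_le hc hd _).trans
    (mul_le_mul_of_nonneg_left (vecEnorm_transpose_mulVec_le hU b) hc)

end EuclideanNorm

theorem abs_ridge_shrinkage_sub_le {lam s t : ℝ} (hlam : 0 < lam) (ht : 0 ≤ t) (hts : t ≤ s) :
    |((t ^ 2 + lam)⁻¹ - lam⁻¹) * t| ≤ s ^ 3 / (lam ^ 2 + lam * s ^ 2) := by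
  have hgap : ((t ^ 2 + lam)⁻¹ - lam⁻¹) * t = -(t ^ 3 / (lam ^ 2 + lam * t ^ 2)) := by
    field_simp
    ring
  rw [hgap, abs_neg, abs_of_nonneg (by positivity), div_le_div_iff₀ (by positivity) (by positivity)]
  have hcube : t ^ 3 ≤ s ^ 3 := pow_le_pow_left₀ ht hts 3
  nlinarith [mul_le_mul_of_nonneg_left hcube (sq_nonneg lam),
    mul_le_mul_of_nonneg_left hts (mul_nonneg (sq_nonneg t) (sq_nonneg s)),
    mul_nonneg (mul_nonneg hlam.le ht) (mul_nonneg ht (sub_nonneg.mpr hts))]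

theorem stmt12_general (m n k l : ℕ) (hl : 0 < l)
    (Uk : Matrix (Fin m) (Fin k) ℝ) (Vk : Matrix (Fin n) (Fin k) ℝ)
    (Uh : Matrix (Fin m) (Fin l) ℝ) (Vh : Matrix (Fin n) (Fin l) ℝ)
    (σ : Fin k → ℝ) (τ : Fin l → ℝ)
    (hτ : ∀ s, 0 < τ s)
    (hτmono : ∀ i j : Fin l, i ≤ j → τ j ≤ τ i)
    (hUk : Ukᵀ * Uk = 1) (hVk : Vkᵀ * Vk = 1)
    (hUh : Uhᵀ * Uh = 1) (hVh : Vhᵀ * Vh = 1)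
    (hUO : Ukᵀ * Uh = 0) (hVO : Vkᵀ * Vh = 0)
    (lam : ℝ) (hlam : 0 < lam)
    (A : Matrix (Fin m) (Fin n) ℝ)
    (hA : A = Uk * Matrix.diagonal σ * Vkᵀ + Uh * Matrix.diagonal τ * Vhᵀ)
    (Ak : Matrix (Fin m) (Fin n) ℝ)
    (hAk : Ak = Uk * Matrix.diagonal σ * Vkᵀ)
    (b : Fin m → ℝ) :
    vecEnorm (((Aᵀ * A + lam • (1 : Matrix (Fin n) (Fin n) ℝ))⁻¹).mulVec (Aᵀ.mulVec b) -
        ((Akᵀ * Ak + lam • (1 : Matrix (Fin n) (Fin n) ℝ))⁻¹).mulVec (Aᵀ.mulVec b)) ≤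
      τ ⟨0, hl⟩ ^ 3 / (lam ^ 2 + lam * τ ⟨0, hl⟩ ^ 2) * vecEnorm b := by
  have hUhUk : Uhᵀ * Uk = 0 := by simpa using congrArg transpose hUO
  have hVhVk : Vhᵀ * Vk = 0 := by simpa using congrArg transpose hVO
  have hAt : Aᵀ = Vk * (diagonal σ * Ukᵀ) + Vh * (diagonal τ * Uhᵀ) := by
    simp only [hA, transpose_add, transpose_mul, transpose_transpose, diagonal_transpose,
      Matrix.mul_assoc]
  have hM_Vk := orthogonal_split_ridge_inv_mul σ _ hUk hVk hUhUk hVhVk hA hlam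
  have hM_Vh := orthogonal_split_ridge_inv_mul τ _ hUh hVh hUO hVO (hA.trans (add_comm _ _)) hlam
  have hMk_Vk := orthogonal_split_ridge_inv_mul (A := Ak) σ 0 hUk hVk hUhUk hVhVk
    (by rw [hAk, Matrix.mul_zero, Matrix.zero_mul, add_zero]) hlam
  have hMk_Vh := orthogonal_split_ridge_inv_mul (A := Ak) 0 (diagonal σ) hUh hVh hUO hVO
    (by simp [hAk]) hlam
  set M := Aᵀ * A + lam • (1 : Matrix (Fin n) (Fin n) ℝ)
  set Mk := Akᵀ * Ak + lam • (1 : Matrix (Fin n) (Fin n) ℝ)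
  have hdiff : M⁻¹ * Aᵀ - Mk⁻¹ * Aᵀ
      = Vh * diagonal (fun j => ((τ j ^ 2 + lam)⁻¹ - lam⁻¹) * τ j) * Uhᵀ := by
    simp only [hAt, Matrix.mul_add, ← Matrix.mul_assoc, hM_Vk, hM_Vh, hMk_Vk, hMk_Vh]
    rw [add_sub_add_left_eq_sub, ← Matrix.sub_mul, ← Matrix.sub_mul, ← Matrix.mul_sub,
      diagonal_sub, Matrix.mul_assoc Vh, diagonal_mul_diagonal]
    simp only [Pi.zero_apply, zero_pow two_ne_zero, zero_add, sub_mul]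
  rw [mulVec_mulVec, mulVec_mulVec, ← sub_mulVec, hdiff]
  exact vecEnorm_mul_diagonal_mul_transpose_mulVec_le hVh hUh
    (div_nonneg (pow_nonneg (hτ _).le 3) (by positivity))
    (fun j => abs_ridge_shrinkage_sub_le hlam (hτ j).le (hτmono _ _ (Nat.zero_le _))) b

/-- The error between `x̄ = (AᵀA + λI)⁻¹ Aᵀ b` and
`x̂₁ = (A_kᵀA_k + λI)⁻¹ Aᵀ b` satisfies
`‖x̄ - x̂₁‖₂ ≤ (σ_{k+1}³/(λ² + λσ_{k+1}²)) ‖b‖₂`. -/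
theorem stmt12 (m n k l : ℕ) (hl : 0 < l)
    (Uk : Matrix (Fin m) (Fin k) ℝ) (Vk : Matrix (Fin n) (Fin k) ℝ)
    (Uh : Matrix (Fin m) (Fin l) ℝ) (Vh : Matrix (Fin n) (Fin l) ℝ)
    (σ : Fin k → ℝ) (τ : Fin l → ℝ)
    (hσ : ∀ s, 0 < σ s) (hτ : ∀ s, 0 < τ s)
    (hσmono : ∀ i j : Fin k, i ≤ j → σ j ≤ σ i)
    (hτmono : ∀ i j : Fin l, i ≤ j → τ j ≤ τ i)
    (hcross : ∀ (i : Fin k) (j : Fin l), τ j ≤ σ i)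
    (hUk : Ukᵀ * Uk = 1) (hVk : Vkᵀ * Vk = 1)
    (hUh : Uhᵀ * Uh = 1) (hVh : Vhᵀ * Vh = 1)
    (hUO : Ukᵀ * Uh = 0) (hVO : Vkᵀ * Vh = 0)
    (lam : ℝ) (hlam : 0 < lam)
    (A : Matrix (Fin m) (Fin n) ℝ)
    (hA : A = Uk * Matrix.diagonal σ * Vkᵀ + Uh * Matrix.diagonal τ * Vhᵀ)
    (Ak : Matrix (Fin m) (Fin n) ℝ)
    (hAk : Ak = Uk * Matrix.diagonal σ * Vkᵀ)
    (b : Fin m → ℝ) :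
    vecEnorm (((Aᵀ * A + lam • (1 : Matrix (Fin n) (Fin n) ℝ))⁻¹).mulVec (Aᵀ.mulVec b) -
        ((Akᵀ * Ak + lam • (1 : Matrix (Fin n) (Fin n) ℝ))⁻¹).mulVec (Aᵀ.mulVec b)) ≤
      τ ⟨0, hl⟩ ^ 3 / (lam ^ 2 + lam * τ ⟨0, hl⟩ ^ 2) * vecEnorm b :=
  stmt12_general m n k l hl Uk Vk Uh Vh σ τ hτ hτmono hUk hVk hUh hVh hUO hVO lam hlam A hA Ak hAk b
end

section
/- The relative error of x̂₁ = (A_k^T A_k + λI)^{-1} A^T b with respect to the true Tikhonov solution x̄ = (A^T A + λI)^{-1} A^T b satisfies ||x̄ - x̂₁||_2 / ||x̄||_2 ≤ σ_{k+1}^2 / λ, provided x̄ ≠ 0. -/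
/-!
Split `A = A_k + A_h` with `A_h = U_h Σ_h V_hᵀ`. Orthogonality of the left factors gives
`AᵀA = A_kᵀA_k + V_h Σ_h² V_hᵀ`, and orthogonality of the right factors gives `A_k V_h = 0`, so
`A_kᵀA_k + λI` acts as `λ` on the range of `V_h`. Since `Aᵀb = (AᵀA + λI) x̄`, this yields
`x̂₁ = x̄ + λ⁻¹ V_h Σ_h² V_hᵀ x̄`, and the error is at most `λ⁻¹ σ_{k+1}² ‖x̄‖` because `V_h` is an
isometry and `V_hᵀ` a contraction. Both regularized Gram matrices are positive definite, so the
inverses are genuine.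
-/

open Matrix

/-- Euclidean (ℓ2) norm of a finite real vector. -/
noncomputable def enorm {n : ℕ} (v : Fin n → ℝ) : ℝ :=
  Real.sqrt (∑ i, v i ^ 2)

section EuclideanNorm

variable {n l : ℕ}

lemma enorm_eq_sqrt_dotProduct (v : Fin n → ℝ) : _root_.enorm v = √(v ⬝ᵥ v) := by
  simp only [_root_.enorm, dotProduct, sq]

lemma enorm_nonneg (v : Fin n → ℝ) : 0 ≤ _root_.enorm v :=
  Real.sqrt_nonneg _

lemma enorm_le_enorm_of_dotProduct_le {u : Fin l → ℝ} {v : Fin n → ℝ} (h : u ⬝ᵥ u ≤ v ⬝ᵥ v) :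
    _root_.enorm u ≤ _root_.enorm v := by
  rw [enorm_eq_sqrt_dotProduct, enorm_eq_sqrt_dotProduct]
  exact Real.sqrt_le_sqrt h

lemma enorm_const_smul (c : ℝ) (v : Fin n → ℝ) : _root_.enorm (c • v) = |c| * _root_.enorm v := by
  simp only [_root_.enorm, Pi.smul_apply, smul_eq_mul, mul_pow, ← Finset.mul_sum]
  rw [Real.sqrt_mul (sq_nonneg c), Real.sqrt_sq_eq_abs]

lemma enorm_sub_comm (x y : Fin n → ℝ) : _root_.enorm (x - y) = _root_.enorm (y - x) := by
  rw [← neg_sub, ← neg_one_smul ℝ (y - x), enorm_const_smul, abs_neg, abs_one, one_mul]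

lemma dotProduct_mulVec_self_of_transpose_mul_self {V : Matrix (Fin n) (Fin l) ℝ}
    (hV : Vᵀ * V = 1) (y : Fin l → ℝ) : V *ᵥ y ⬝ᵥ V *ᵥ y = y ⬝ᵥ y := by
  rw [dotProduct_mulVec, ← mulVec_transpose, mulVec_mulVec, hV, one_mulVec]

lemma enorm_mulVec_of_transpose_mul_self {V : Matrix (Fin n) (Fin l) ℝ} (hV : Vᵀ * V = 1)
    (y : Fin l → ℝ) : _root_.enorm (V *ᵥ y) = _root_.enorm y := by
  rw [enorm_eq_sqrt_dotProduct, enorm_eq_sqrt_dotProduct,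
    dotProduct_mulVec_self_of_transpose_mul_self hV]

-- Pythagoras for the orthogonal projection `V Vᵀ`.
lemma enorm_transpose_mulVec_le {V : Matrix (Fin n) (Fin l) ℝ} (hV : Vᵀ * V = 1)
    (x : Fin n → ℝ) : _root_.enorm (Vᵀ *ᵥ x) ≤ _root_.enorm x := by
  set w := Vᵀ *ᵥ x
  have hcross : x ⬝ᵥ V *ᵥ w = w ⬝ᵥ w := by rw [dotProduct_mulVec, ← mulVec_transpose]
  have hpythagoras : x ⬝ᵥ x = w ⬝ᵥ w + (x - V *ᵥ w) ⬝ᵥ (x - V *ᵥ w) := by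
    simp only [sub_dotProduct, dotProduct_sub, dotProduct_comm (V *ᵥ w) x, hcross,
      dotProduct_mulVec_self_of_transpose_mul_self hV]
    ring
  apply enorm_le_enorm_of_dotProduct_le
  linarith [show 0 ≤ (x - V *ᵥ w) ⬝ᵥ (x - V *ᵥ w) from
    Finset.sum_nonneg fun i _ => mul_self_nonneg _]

lemma enorm_diagonal_mulVec_le {d : Fin n → ℝ} {C : ℝ} (hC : 0 ≤ C) (hd : ∀ i, |d i| ≤ C)
    (w : Fin n → ℝ) : _root_.enorm (diagonal d *ᵥ w) ≤ C * _root_.enorm w := by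
  have hsq : ∀ i, (d i * w i) ^ 2 ≤ C ^ 2 * w i ^ 2 := fun i => by
    rw [mul_pow, ← sq_abs (d i)]
    gcongr
    exact hd i
  simp only [_root_.enorm, mulVec_diagonal]
  calc √(∑ i, (d i * w i) ^ 2) ≤ √(C ^ 2 * ∑ i, w i ^ 2) := by
        rw [Finset.mul_sum]; gcongr with i; exact hsq i
    _ = C * √(∑ i, w i ^ 2) := by
        rw [Real.sqrt_mul (sq_nonneg C), Real.sqrt_sq hC]

lemma enorm_conj_diagonal_mulVec_le {V : Matrix (Fin n) (Fin l) ℝ} (hV : Vᵀ * V = 1)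
    {d : Fin l → ℝ} {C : ℝ} (hC : 0 ≤ C) (hd : ∀ i, |d i| ≤ C) (x : Fin n → ℝ) :
    _root_.enorm ((V * diagonal d * Vᵀ) *ᵥ x) ≤ C * _root_.enorm x := by
  rw [← mulVec_mulVec, ← mulVec_mulVec, enorm_mulVec_of_transpose_mul_self hV]
  exact (enorm_diagonal_mulVec_le hC hd _).trans
    (mul_le_mul_of_nonneg_left (enorm_transpose_mulVec_le hV x) hC)

end EuclideanNorm

section Factorization

variable {R : Type*} [CommRing R] {m n p p' q q' : Type*} [Fintype m] [Fintype p] [Fintype p']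
  [Fintype q] [Fintype q']

lemma transpose_mul_self_add_of_transpose_mul_eq_zero {X Y : Matrix m n R} (h : Xᵀ * Y = 0) :
    (X + Y)ᵀ * (X + Y) = Xᵀ * X + Yᵀ * Y := by
  have h' : Yᵀ * X = 0 := by rw [← transpose_transpose X, ← transpose_mul, h, transpose_zero]
  rw [transpose_add, Matrix.add_mul, Matrix.mul_add, Matrix.mul_add, h, h', add_zero, zero_add]

lemma transpose_mul_eq_zero_of_transpose_mul_eq_zero {U₁ : Matrix m p R} {U₂ : Matrix m q R}
    (hU : U₁ᵀ * U₂ = 0) (D₁ : Matrix p p' R) (V₁ : Matrix n p' R) (D₂ : Matrix q q' R)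
    (V₂ : Matrix n q' R) : (U₁ * D₁ * V₁ᵀ)ᵀ * (U₂ * D₂ * V₂ᵀ) = 0 := by
  simp only [transpose_mul, transpose_transpose, Matrix.mul_assoc]
  rw [← Matrix.mul_assoc U₁ᵀ, hU]
  simp only [Matrix.zero_mul, Matrix.mul_zero]

lemma transpose_mul_self_of_transpose_mul_self [DecidableEq p] {U : Matrix m p R}
    (hU : Uᵀ * U = 1) (D : Matrix p p' R) (V : Matrix n p' R) :
    (U * D * Vᵀ)ᵀ * (U * D * Vᵀ) = V * (Dᵀ * D) * Vᵀ := by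
  simp only [transpose_mul, transpose_transpose, Matrix.mul_assoc]
  rw [← Matrix.mul_assoc Uᵀ, hU, Matrix.one_mul]

end Factorization

section Regularization

variable {K : Type*} [Field K] {n l : Type*} [Fintype n] [Fintype l] [DecidableEq n]

lemma inv_add_smul_one_mulVec_add_mul {B : Matrix n n K} {V : Matrix n l K} (S : Matrix l n K)
    {c : K} (hc : c ≠ 0) (hBV : B * V = 0) (hdet : IsUnit (B + c • 1).det) (x : n → K) :
    (B + c • 1)⁻¹ *ᵥ ((B + V * S + c • 1) *ᵥ x) = x + c⁻¹ • (V * S) *ᵥ x := by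
  have hV : (B + c • 1)⁻¹ * V = c⁻¹ • V := by
    calc (B + c • 1)⁻¹ * V = (B + c • 1)⁻¹ * ((B + c • 1) * (c⁻¹ • V)) := by
          rw [Matrix.add_mul, Matrix.mul_smul, hBV, smul_zero, zero_add, Matrix.smul_mul,
            Matrix.one_mul, smul_smul, mul_inv_cancel₀ hc, one_smul]
      _ = c⁻¹ • V := nonsing_inv_mul_cancel_left _ _ hdet
  rw [mulVec_mulVec, add_right_comm, mul_add, nonsing_inv_mul _ hdet, ← Matrix.mul_assoc, hV,
    add_mulVec, one_mulVec, Matrix.smul_mul, smul_mulVec]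

end Regularization

lemma isUnit_det_transpose_mul_self_add_smul_one {m n : Type*} [Fintype m] [Fintype n]
    [DecidableEq n] (A : Matrix m n ℝ) {c : ℝ} (hc : 0 < c) : IsUnit (Aᵀ * A + c • 1).det := by
  rw [← isUnit_iff_isUnit_det]
  refine PosDef.isUnit ?_
  have hgram : (Aᵀ * A).PosSemidef :=
    conjTranspose_eq_transpose_of_trivial A ▸ posSemidef_conjTranspose_mul_self A
  exact PosDef.posSemidef_add hgram (PosDef.one.smul hc)

theorem stmt13_general (m n k l : ℕ) (hl : 0 < l)
    (Uk : Matrix (Fin m) (Fin k) ℝ) (Vk : Matrix (Fin n) (Fin k) ℝ)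
    (Uh : Matrix (Fin m) (Fin l) ℝ) (Vh : Matrix (Fin n) (Fin l) ℝ)
    (σ : Fin k → ℝ) (τ : Fin l → ℝ)
    (hτ : ∀ s, 0 < τ s)
    (hτmono : ∀ i j : Fin l, i ≤ j → τ j ≤ τ i)
    (hUh : Uhᵀ * Uh = 1) (hVh : Vhᵀ * Vh = 1)
    (hUO : Ukᵀ * Uh = 0) (hVO : Vkᵀ * Vh = 0)
    (lam : ℝ) (hlam : 0 < lam)
    (A : Matrix (Fin m) (Fin n) ℝ)
    (hA : A = Uk * Matrix.diagonal σ * Vkᵀ + Uh * Matrix.diagonal τ * Vhᵀ)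
    (Ak : Matrix (Fin m) (Fin n) ℝ)
    (hAk : Ak = Uk * Matrix.diagonal σ * Vkᵀ)
    (b : Fin m → ℝ)
    (xbar : Fin n → ℝ)
    (hxbar : xbar =
      ((Aᵀ * A + lam • (1 : Matrix (Fin n) (Fin n) ℝ))⁻¹).mulVec (Aᵀ.mulVec b)) :
    _root_.enorm (xbar -
        ((Akᵀ * Ak + lam • (1 : Matrix (Fin n) (Fin n) ℝ))⁻¹).mulVec (Aᵀ.mulVec b)) /
      _root_.enorm xbar ≤ τ ⟨0, hl⟩ ^ 2 / lam := by
  set τ2 : Fin l → ℝ := fun i => τ i * τ i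
  have hgram : Aᵀ * A = Akᵀ * Ak + Vh * (diagonal τ2 * Vhᵀ) := by
    rw [hA, ← hAk, transpose_mul_self_add_of_transpose_mul_eq_zero
      (hAk ▸ transpose_mul_eq_zero_of_transpose_mul_eq_zero hUO _ _ _ _),
      transpose_mul_self_of_transpose_mul_self hUh, diagonal_transpose, diagonal_mul_diagonal,
      Matrix.mul_assoc]
  have hAkVh : Akᵀ * Ak * Vh = 0 := by
    simp only [hAk, Matrix.mul_assoc, hVO, Matrix.mul_zero]
  have hAtb : Aᵀ *ᵥ b = (Aᵀ * A + lam • 1) *ᵥ xbar := by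
    rw [hxbar, mulVec_mulVec,
      mul_nonsing_inv _ (isUnit_det_transpose_mul_self_add_smul_one A hlam), one_mulVec]
  have hsol : (Akᵀ * Ak + lam • 1)⁻¹ *ᵥ (Aᵀ *ᵥ b) =
      xbar + lam⁻¹ • (Vh * diagonal τ2 * Vhᵀ) *ᵥ xbar := by
    rw [hAtb, hgram, inv_add_smul_one_mulVec_add_mul _ hlam.ne' hAkVh
      (isUnit_det_transpose_mul_self_add_smul_one Ak hlam), Matrix.mul_assoc]
  have hτ2 : ∀ i, |τ2 i| ≤ τ ⟨0, hl⟩ ^ 2 := fun i => by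
    have hτi : τ i ≤ τ ⟨0, hl⟩ := hτmono ⟨0, hl⟩ i (Nat.zero_le i)
    rw [abs_of_pos (mul_pos (hτ i) (hτ i)), sq]
    exact mul_self_le_mul_self (hτ i).le hτi
  rw [hsol, enorm_sub_comm, add_sub_cancel_left, enorm_const_smul, abs_inv, abs_of_pos hlam]
  refine div_le_of_le_mul₀ (enorm_nonneg _) (by positivity) ?_
  calc lam⁻¹ * _root_.enorm ((Vh * diagonal τ2 * Vhᵀ) *ᵥ xbar)
      ≤ lam⁻¹ * (τ ⟨0, hl⟩ ^ 2 * _root_.enorm xbar) := by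
        gcongr
        exact enorm_conj_diagonal_mulVec_le hVh (sq_nonneg _) hτ2 xbar
    _ = τ ⟨0, hl⟩ ^ 2 / lam * _root_.enorm xbar := by ring

/-- The relative error of `x̂₁ = (A_kᵀA_k + λI)⁻¹ Aᵀ b` with respect to the true
Tikhonov solution `x̄ = (AᵀA + λI)⁻¹ Aᵀ b` satisfies
`‖x̄ - x̂₁‖₂ / ‖x̄‖₂ ≤ σ_{k+1}² / λ`, provided `x̄ ≠ 0`. -/
theorem stmt13 (m n k l : ℕ) (hl : 0 < l)
    (Uk : Matrix (Fin m) (Fin k) ℝ) (Vk : Matrix (Fin n) (Fin k) ℝ)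
    (Uh : Matrix (Fin m) (Fin l) ℝ) (Vh : Matrix (Fin n) (Fin l) ℝ)
    (σ : Fin k → ℝ) (τ : Fin l → ℝ)
    (hσ : ∀ s, 0 < σ s) (hτ : ∀ s, 0 < τ s)
    (hσmono : ∀ i j : Fin k, i ≤ j → σ j ≤ σ i)
    (hτmono : ∀ i j : Fin l, i ≤ j → τ j ≤ τ i)
    (hcross : ∀ (i : Fin k) (j : Fin l), τ j ≤ σ i)
    (hUk : Ukᵀ * Uk = 1) (hVk : Vkᵀ * Vk = 1)
    (hUh : Uhᵀ * Uh = 1) (hVh : Vhᵀ * Vh = 1)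
    (hUO : Ukᵀ * Uh = 0) (hVO : Vkᵀ * Vh = 0)
    (lam : ℝ) (hlam : 0 < lam)
    (A : Matrix (Fin m) (Fin n) ℝ)
    (hA : A = Uk * Matrix.diagonal σ * Vkᵀ + Uh * Matrix.diagonal τ * Vhᵀ)
    (Ak : Matrix (Fin m) (Fin n) ℝ)
    (hAk : Ak = Uk * Matrix.diagonal σ * Vkᵀ)
    (b : Fin m → ℝ)
    (xbar : Fin n → ℝ)
    (hxbar : xbar =
      ((Aᵀ * A + lam • (1 : Matrix (Fin n) (Fin n) ℝ))⁻¹).mulVec (Aᵀ.mulVec b))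
    (hx0 : xbar ≠ 0) :
    _root_.enorm (xbar -
        ((Akᵀ * Ak + lam • (1 : Matrix (Fin n) (Fin n) ℝ))⁻¹).mulVec (Aᵀ.mulVec b)) /
      _root_.enorm xbar ≤ τ ⟨0, hl⟩ ^ 2 / lam :=
  stmt13_general m n k l hl Uk Vk Uh Vh σ τ hτ hτmono hUh hVh hUO hVO lam hlam A hA Ak hAk b xbar
    hxbar
end
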